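/- Let G = (V,E) be a finite simple graph with list assignment L with κ colors, let j ∈ {2,...,κ}, and let W ⊆ V. Then the induced subgraph G[W] is list-colorable with respect to the lists L^j(v), v ∈ W, if and only if there exists an inclusion-maximal independent set I of G[W] such that, setting I^{(j)} = {v ∈ I : j ∈ L(v)}, either I^{(j)} = W, or G[W \ I^{(j)}] is list-colorable with respect to the lists L^{j-1}(v), v ∈ W \ I^{(j)}. -/
import Mathlib


/-- `S` is an independent set of the graph `G` (no two of its vertices are adjacent). -/
def IsIndepIn {V : Type*} (G : SimpleGraph V) (S : Finset V) : Prop :=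
  ∀ v ∈ S, ∀ w ∈ S, ¬ G.Adj v w

/-- `S` is an inclusion-maximal independent set of the induced subgraph `G[W]`:
it is an independent subset of `W` contained in no strictly larger independent
subset of `W`. -/
def IsMaxIndepIn {V : Type*} (G : SimpleGraph V) (W S : Finset V) : Prop :=
  S ⊆ W ∧ IsIndepIn G S ∧ ∀ T : Finset V, T ⊆ W → IsIndepIn G T → S ⊆ T → T = S

/-- The induced subgraph `G[W]` admits a proper list-coloring with respect to
the lists `L v`, `v ∈ W`. -/
def ListColorableOn {V : Type*} (G : SimpleGraph V) (L : V → Finset ℕ) (W : Finset V) : Prop :=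
  ∃ f : V → ℕ, (∀ v ∈ W, f v ∈ L v) ∧ ∀ v ∈ W, ∀ w ∈ W, G.Adj v w → f v ≠ f w

/-- Any independent subset of `W` extends to an inclusion-maximal independent set of `G[W]`. -/
lemma exists_max_indep_ext {V : Type*} [DecidableEq V] (G : SimpleGraph V)
    (W A : Finset V) (hAW : A ⊆ W) (hA : IsIndepIn G A) :
    ∃ I : Finset V, IsMaxIndepIn G W I ∧ A ⊆ I := by
  classical
  set 𝒜 := W.powerset.filter (fun T => IsIndepIn G T ∧ A ⊆ T) with h𝒜
  have hne : 𝒜.Nonempty := ⟨A, by simp [h𝒜, Finset.mem_filter, Finset.mem_powerset, hAW, hA]⟩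
  obtain ⟨I, hI, hmax⟩ := 𝒜.exists_max_image Finset.card hne
  rw [h𝒜, Finset.mem_filter, Finset.mem_powerset] at hI
  refine ⟨I, ⟨hI.1, hI.2.1, ?_⟩, hI.2.2⟩
  intro T hTW hT hIT
  have hTmem : T ∈ 𝒜 := by
    rw [h𝒜, Finset.mem_filter, Finset.mem_powerset]
    exact ⟨hTW, hT, hI.2.2.trans hIT⟩
  exact (Finset.eq_of_subset_of_card_le hIT (hmax T hTmem)).symm

/-- For any `W ⊆ V`, the induced subgraph `G[W]` is list-colorable with respect
to the truncated lists `Lʲ v = L v ∩ [1,j]` iff there is an inclusion-maximal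
independent set `I` of `G[W]` such that, for `I⁽ʲ⁾ = {v ∈ I : j ∈ L v}`,
either `I⁽ʲ⁾ = W` or `G[W \ I⁽ʲ⁾]` is list-colorable with respect to `Lʲ⁻¹`. -/
theorem stmt4 {V : Type*} [Fintype V] [DecidableEq V] (G : SimpleGraph V)
    (κ : ℕ) (L : V → Finset ℕ) (hL : ∀ v, L v ⊆ Finset.Icc 1 κ)
    (j : ℕ) (hj : j ∈ Finset.Icc 2 κ) (W : Finset V) :
    ListColorableOn G (fun v => L v ∩ Finset.Icc 1 j) W ↔
      ∃ I : Finset V, IsMaxIndepIn G W I ∧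
        (I.filter (fun v => j ∈ L v) = W ∨
          ListColorableOn G (fun v => L v ∩ Finset.Icc 1 (j - 1))
            (W \ I.filter (fun v => j ∈ L v))) := by
  classical
  have hj2 : 2 ≤ j := (Finset.mem_Icc.mp hj).1
  constructor
  · rintro ⟨f, hf, hprop⟩
    set A := W.filter (fun v => f v = j) with hA
    have hAW : A ⊆ W := Finset.filter_subset _ _
    have hAind : IsIndepIn G A := by
      intro v hv w hw hadj
      rw [hA, Finset.mem_filter] at hv hw
      exact hprop v hv.1 w hw.1 hadj (hv.2.trans hw.2.symm)
    obtain ⟨I, hImax, hAI⟩ := exists_max_indep_ext G W A hAW hAind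
    refine ⟨I, hImax, Or.inr ⟨f, ?_, ?_⟩⟩
    · intro v hv
      rw [Finset.mem_sdiff] at hv
      have h1 := hf v hv.1
      rw [Finset.mem_inter, Finset.mem_Icc] at h1
      have hfvj : f v ≠ j := by
        intro hfj
        apply hv.2
        rw [Finset.mem_filter]
        refine ⟨hAI ?_, hfj ▸ h1.1⟩
        rw [hA, Finset.mem_filter]
        exact ⟨hv.1, hfj⟩
      rw [Finset.mem_inter, Finset.mem_Icc]
      exact ⟨h1.1, h1.2.1, by omega⟩
    · intro v hv w hw hadj
      rw [Finset.mem_sdiff] at hv hw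
      exact hprop v hv.1 w hw.1 hadj
  · rintro ⟨I, hImax, hcase | ⟨g, hg, hgprop⟩⟩
    · refine ⟨fun _ => j, ?_, ?_⟩
      · intro v hv
        have : v ∈ I.filter (fun v => j ∈ L v) := hcase ▸ hv
        rw [Finset.mem_filter] at this
        rw [Finset.mem_inter, Finset.mem_Icc]
        exact ⟨this.2, le_trans one_le_two hj2, le_refl j⟩
      · intro v hv w hw hadj _
        have hv' : v ∈ I.filter (fun v => j ∈ L v) := hcase ▸ hv
        have hw' : w ∈ I.filter (fun v => j ∈ L v) := hcase ▸ hw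
        rw [Finset.mem_filter] at hv' hw'
        exact hImax.2.1 v hv'.1 w hw'.1 hadj
    · set Ij := I.filter (fun v => j ∈ L v) with hIj
      refine ⟨fun v => if v ∈ Ij then j else g v, ?_, ?_⟩
      · intro v hv
        by_cases h : v ∈ Ij
        · simp only [h, if_true]
          rw [hIj, Finset.mem_filter] at h
          rw [Finset.mem_inter, Finset.mem_Icc]
          exact ⟨h.2, by omega, le_refl j⟩
        · simp only [h, if_false]
          have := hg v (Finset.mem_sdiff.mpr ⟨hv, h⟩)
          rw [Finset.mem_inter, Finset.mem_Icc] at this ⊢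
          obtain ⟨hm, h1', h2'⟩ := this
          exact ⟨hm, h1', by omega⟩
      · intro v hv w hw hadj
        by_cases h1 : v ∈ Ij <;> by_cases h2 : w ∈ Ij
        · exact absurd hadj (hImax.2.1 v (Finset.filter_subset _ _ h1)
            w (Finset.filter_subset _ _ h2))
        · simp only [h1, h2, if_true, if_false]
          have := hg w (Finset.mem_sdiff.mpr ⟨hw, h2⟩)
          rw [Finset.mem_inter, Finset.mem_Icc] at this
          omega
        · simp only [h1, h2, if_true, if_false]
          have := hg v (Finset.mem_sdiff.mpr ⟨hv, h1⟩)
          rw [Finset.mem_inter, Finset.mem_Icc] at this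
          omega
        · simp only [h1, h2, if_false]
          exact hgprop v (Finset.mem_sdiff.mpr ⟨hv, h1⟩)
            w (Finset.mem_sdiff.mpr ⟨hw, h2⟩) hadj
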